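/- Let ε₁ be a random variable on [0,∞) with continuous density δ, survival function Δ(d) = ∫_d^∞ δ, and let ε₂ have, conditionally on ε₁, density δ(ε₂)/(1-Δ(ε₁)) on [0,ε₁]. Then for any d ≥ 0 with 0 < Δ(d) < 1, P(ε₂ ≥ d) = Δ(d) + (1-Δ(d))·ln(1-Δ(d)). -/

import Mathlib

/-! With `Δ` the tail integral of `δ`, the inner integral is `Δ d - Δ ε₁` for `ε₁ > d` and `0`
otherwise, so the left-hand side is `∫_d^∞ δ (Δ d - Δ) / (1 - Δ)`. Since `Δ' = -δ`, an
antiderivative of this integrand is `-Δ - (1 - Δ d) log (1 - Δ)`, which tends to `0` at infinity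
because `Δ` does. -/

open MeasureTheory Set Filter Topology

theorem hasDerivAt_integral_Ioi {δ : ℝ → ℝ} {a x : ℝ} (hint : IntegrableOn δ (Ioi a))
    (hx : a < x) (hδx : ContinuousAt δ x) :
    HasDerivAt (fun t => ∫ y in Ioi t, δ y) (-δ x) x := by
  have hprim : HasDerivAt (fun t => ∫ y in a..t, δ y) (δ x) x :=
    intervalIntegral.integral_hasDerivAt_right
      ((intervalIntegrable_iff_integrableOn_Ioc_of_le hx.le).2
        (hint.mono_set Ioc_subset_Ioi_self))
      (AEStronglyMeasurable.stronglyMeasurableAtFilter_of_mem hint.aestronglyMeasurable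
        (Ioi_mem_nhds hx)) hδx
  refine (hprim.const_sub (∫ y in Ioi a, δ y)).congr_of_eventuallyEq ?_
  filter_upwards [Ioi_mem_nhds hx] with t ht
  rw [← intervalIntegral.integral_Ioi_sub_Ioi hint ht.le, sub_sub_cancel]

section Antiderivative

variable {F : ℝ → ℝ} {c : ℝ}

theorem HasDerivAt.neg_sub_mul_log_one_sub {f x : ℝ} (hF : HasDerivAt F (-f) x) (hx : F x < 1) :
    HasDerivAt (fun y => -F y - (1 - c) * Real.log (1 - F y)) (f / (1 - F x) * (c - F x)) x := by
  have hlog := (hF.const_sub 1).log (sub_ne_zero.2 hx.ne')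
  refine (hF.neg.sub (hlog.const_mul (1 - c))).congr_deriv ?_
  field_simp [sub_ne_zero.2 hx.ne']
  ring

theorem Filter.Tendsto.neg_sub_mul_log_one_sub {l : Filter ℝ} (hF : Tendsto F l (𝓝 0)) :
    Tendsto (fun y => -F y - (1 - c) * Real.log (1 - F y)) l (𝓝 0) := by
  have hlog : Tendsto (fun y => Real.log (1 - F y)) l (𝓝 0) := by
    simpa using (hF.const_sub 1).log (by norm_num)
  simpa using hF.neg.sub (hlog.const_mul (1 - c))

end Antiderivative

theorem integral_Ioi_div_one_sub_mul_sub {δ F : ℝ → ℝ} {d : ℝ}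
    (hcont : ContinuousWithinAt F (Ici d) d) (hderiv : ∀ x ∈ Ioi d, HasDerivAt F (-δ x) x)
    (hδ : ∀ x ∈ Ioi d, 0 ≤ δ x) (hanti : ∀ x ∈ Ioi d, F x ≤ F d)
    (hlim : Tendsto F atTop (𝓝 0)) (hd1 : F d < 1) :
    ∫ x in Ioi d, δ x / (1 - F x) * (F d - F x) = F d + (1 - F d) * Real.log (1 - F d) := by
  have hlt : ∀ x ∈ Ioi d, F x < 1 := fun x hx => (hanti x hx).trans_lt hd1
  have hHcont : ContinuousWithinAt (fun y => -F y - (1 - F d) * Real.log (1 - F y)) (Ici d) d :=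
    hcont.neg.sub (((continuousWithinAt_const.sub hcont).log (sub_ne_zero.2 hd1.ne')).const_mul _)
  have hnonneg : ∀ x ∈ Ioi d, 0 ≤ δ x / (1 - F x) * (F d - F x) := fun x hx =>
    mul_nonneg (div_nonneg (hδ x hx) (sub_nonneg.2 (hlt x hx).le)) (sub_nonneg.2 (hanti x hx))
  rw [integral_Ioi_of_hasDerivAt_of_nonneg hHcont
    (fun x hx => (hderiv x hx).neg_sub_mul_log_one_sub (hlt x hx)) hnonneg
    hlim.neg_sub_mul_log_one_sub]
  ring

theorem very_hedge_integral_general (δ Δ : ℝ → ℝ)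
    (hδc : Continuous δ) (hδnn : ∀ x, 0 ≤ δ x)
    (hΔ : ∀ d, Δ d = ∫ x in Set.Ioi d, δ x)
    (d : ℝ) (hd : 0 ≤ d) (hΔd : 0 < Δ d) (hΔd1 : Δ d < 1) :
    ∫ ε₁ in Set.Ioi (0:ℝ),
        (δ ε₁ / (1 - Δ ε₁)) * ∫ ε₂ in Set.Ioc d ε₁, δ ε₂
      = Δ d + (1 - Δ d) * Real.log (1 - Δ d) := by
  obtain rfl : Δ = fun t => ∫ x in Ioi t, δ x := funext hΔ
  have hint : IntegrableOn δ (Ioi d) := Integrable.of_integral_ne_zero hΔd.ne'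
  have hanti : ∀ x ∈ Ioi d, ∫ y in Ioi x, δ y ≤ ∫ y in Ioi d, δ y := fun x hx =>
    setIntegral_mono_set hint (Eventually.of_forall fun y => hδnn y)
      (Ioi_subset_Ioi (le_of_lt hx)).eventuallyLE
  rw [setIntegral_eq_of_subset_of_forall_sdiff_eq_zero measurableSet_Ioi (Ioi_subset_Ioi hd)
      fun x hx => by rw [Ioc_eq_empty (show ¬d < x from hx.2), setIntegral_empty, mul_zero],
    setIntegral_congr_fun measurableSet_Ioi fun x (hx : d < x) => by
      rw [← intervalIntegral.integral_of_le hx.le,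
        ← intervalIntegral.integral_Ioi_sub_Ioi hint hx.le]]
  exact integral_Ioi_div_one_sub_mul_sub hint.continuousWithinAt_Ici_primitive_Ioi
    (fun x hx => hasDerivAt_integral_Ioi hint hx hδc.continuousAt)
    (fun x _ => hδnn x) hanti (tendsto_integral_Ioi_zero tendsto_id) hΔd1

theorem very_hedge_integral (δ Δ : ℝ → ℝ)
    (hδc : Continuous δ) (hδnn : ∀ x, 0 ≤ δ x) (hδ0 : ∀ x < 0, δ x = 0)
    (hnorm : ∫ x in Set.Ioi (0:ℝ), δ x = 1)
    (hΔ : ∀ d, Δ d = ∫ x in Set.Ioi d, δ x)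
    (d : ℝ) (hd : 0 ≤ d) (hΔd : 0 < Δ d) (hΔd1 : Δ d < 1) :
    ∫ ε₁ in Set.Ioi (0:ℝ),
        (δ ε₁ / (1 - Δ ε₁)) * ∫ ε₂ in Set.Ioc d ε₁, δ ε₂
      = Δ d + (1 - Δ d) * Real.log (1 - Δ d) :=
  very_hedge_integral_general δ Δ hδc hδnn hΔ d hd hΔd hΔd1
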